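/- arXiv:1607.08390 — 3 statements merged into one kernel-verified Lean document; each statement's English description precedes it below -/
import Mathlib

section
/- For all 0 < η < 1, 1 < α < 1/η, and (t,s) ∈ [0,1]×[0,1], the Green's function G(t,s) satisfies 0 ≤ G(t,s) ≤ g₀(s) where g₀(s) = (1+α)/(1-αη) · s(1-s). -/
/-!
Writing `G = N / (2(1 - αη))` and `g₀ = 2(1 + α)s(1 - s) / (2(1 - αη))`, it suffices to show
`0 ≤ N ≤ 2(1 + α)s(1 - s)` on each of the four pieces. The key inputs are `1 - αη ≤ 1 - αs`
for `s ≤ η`, the bound `t² ≤ s` for `t ≤ s`, and, for `η ≤ s ≤ t`, the rewriting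
`N = s((t - s) + t(1 - t)) + αη(t - s)²` together with `αη(t - s)² ≤ αs(1 - s)²`.
-/

open Set

noncomputable def greenG (η α t s : ℝ) : ℝ :=
  (1 / (2 * (1 - α * η))) *
    (if s ≤ min η t then (2 * t * s - s ^ 2) * (1 - α * η) + t ^ 2 * s * (α - 1)
     else if t ≤ s ∧ s ≤ η then t ^ 2 * (1 - α * η) + t ^ 2 * s * (α - 1)
     else if η ≤ s ∧ s ≤ t then (2 * t * s - s ^ 2) * (1 - α * η) + t ^ 2 * (α * η - s)
     else t ^ 2 * (1 - s))

noncomputable def g0 (η α s : ℝ) : ℝ := (1 + α) / (1 - α * η) * (s * (1 - s))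

noncomputable def greenNumerator (η α t s : ℝ) : ℝ :=
  if s ≤ min η t then (2 * t * s - s ^ 2) * (1 - α * η) + t ^ 2 * s * (α - 1)
  else if t ≤ s ∧ s ≤ η then t ^ 2 * (1 - α * η) + t ^ 2 * s * (α - 1)
  else if η ≤ s ∧ s ≤ t then (2 * t * s - s ^ 2) * (1 - α * η) + t ^ 2 * (α * η - s)
  else t ^ 2 * (1 - s)

lemma greenG_eq_mul_greenNumerator (η α t s : ℝ) :
    greenG η α t s = 1 / (2 * (1 - α * η)) * greenNumerator η α t s :=
  rfl

lemma g0_eq_mul (η α s : ℝ) :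
    g0 η α s = 1 / (2 * (1 - α * η)) * (2 * (1 + α) * (s * (1 - s))) := by
  simp only [g0, one_div, mul_inv]
  ring

section Pieces

variable {η α t s : ℝ}

lemma sq_le_of_le_of_le_one (h0 : 0 ≤ t) (hts : t ≤ s) (hs1 : s ≤ 1) : t ^ 2 ≤ s := by
  nlinarith

lemma piece₁_mem_Icc (hα : 1 ≤ α) (hαη : α * η ≤ 1)
    (hs0 : 0 ≤ s) (hsη : s ≤ η) (hst : s ≤ t) (ht1 : t ≤ 1) :
    (2 * t * s - s ^ 2) * (1 - α * η) + t ^ 2 * s * (α - 1) ∈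
      Icc 0 (2 * (1 + α) * (s * (1 - s))) := by
  have hD : 1 - α * η ≤ 1 - α * s := by nlinarith
  have hs2 : 0 ≤ s * (2 - s) := mul_nonneg hs0 (by linarith)
  constructor
  · have h₁ := mul_nonneg (mul_nonneg hs0 (by linarith : 0 ≤ 2 * t - s)) (sub_nonneg.2 hαη)
    have h₂ := mul_nonneg (mul_nonneg (sq_nonneg t) hs0) (sub_nonneg.2 hα)
    nlinarith
  · have h₁ : (2 * t * s - s ^ 2) * (1 - α * η) ≤ s * (2 - s) * (1 - α * s) :=
      mul_le_mul (by nlinarith) hD (sub_nonneg.2 hαη) hs2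
    have h₂ : t ^ 2 * s * (α - 1) ≤ s * (α - 1) :=
      mul_le_mul_of_nonneg_right
        (mul_le_of_le_one_left hs0 (pow_le_one₀ (hs0.trans hst) ht1)) (sub_nonneg.2 hα)
    calc (2 * t * s - s ^ 2) * (1 - α * η) + t ^ 2 * s * (α - 1)
        ≤ s * (2 - s) * (1 - α * s) + s * (α - 1) := by linarith
      _ = 2 * (1 + α) * (s * (1 - s)) - s * ((1 - s) + α * (1 - s ^ 2)) := by ring
      _ ≤ 2 * (1 + α) * (s * (1 - s)) := by
          have : 0 ≤ (1 - s) + α * (1 - s ^ 2) := by nlinarith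
          linarith [mul_nonneg hs0 this]

lemma piece₂_mem_Icc (hα : 1 ≤ α) (hαη : α * η ≤ 1)
    (ht0 : 0 ≤ t) (hts : t ≤ s) (hsη : s ≤ η) (hs1 : s ≤ 1) :
    t ^ 2 * (1 - α * η) + t ^ 2 * s * (α - 1) ∈ Icc 0 (2 * (1 + α) * (s * (1 - s))) := by
  have hs0 : 0 ≤ s := ht0.trans hts
  have hfac : 0 ≤ (1 - α * η) + s * (α - 1) := by nlinarith
  have hD : 1 - α * η ≤ 1 - α * s := by nlinarith
  have ht2 := sq_le_of_le_of_le_one ht0 hts hs1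
  constructor
  · nlinarith [mul_nonneg (sq_nonneg t) hfac]
  · calc t ^ 2 * (1 - α * η) + t ^ 2 * s * (α - 1)
        = t ^ 2 * ((1 - α * η) + s * (α - 1)) := by ring
      _ ≤ s * ((1 - α * s) + s * (α - 1)) :=
          (mul_le_mul_of_nonneg_right ht2 hfac).trans (mul_le_mul_of_nonneg_left (by linarith) hs0)
      _ = s * (1 - s) := by ring
      _ ≤ 2 * (1 + α) * (s * (1 - s)) := by nlinarith [mul_nonneg hs0 (sub_nonneg.2 hs1)]

lemma piece₃_mem_Icc (hα : 0 ≤ α) (hη : 0 ≤ η)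
    (hηs : η ≤ s) (hst : s ≤ t) (ht1 : t ≤ 1) :
    (2 * t * s - s ^ 2) * (1 - α * η) + t ^ 2 * (α * η - s) ∈
      Icc 0 (2 * (1 + α) * (s * (1 - s))) := by
  have hs0 : 0 ≤ s := hη.trans hηs
  have hs1 : s ≤ 1 := hst.trans ht1
  have hN : (2 * t * s - s ^ 2) * (1 - α * η) + t ^ 2 * (α * η - s)
      = s * ((t - s) + t * (1 - t)) + α * η * (t - s) ^ 2 := by ring
  have hsq : (t - s) ^ 2 ≤ (1 - s) ^ 2 := by nlinarith
  have hss : s * (1 - s) ^ 2 ≤ s * (1 - s) := by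
    nlinarith [mul_nonneg (mul_nonneg hs0 hs0) (sub_nonneg.2 hs1)]
  rw [hN]
  constructor
  · have : 0 ≤ (t - s) + t * (1 - t) := by nlinarith
    positivity
  · calc s * ((t - s) + t * (1 - t)) + α * η * (t - s) ^ 2
        = s * (1 - s) - s * (1 - t) ^ 2 + α * η * (t - s) ^ 2 := by ring
      _ ≤ s * (1 - s) + α * (s * (1 - s) ^ 2) := by
          nlinarith [mul_nonneg hs0 (sq_nonneg (1 - t)),
            mul_le_mul hηs hsq (sq_nonneg _) hs0, mul_nonneg hα (sq_nonneg (t - s))]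
      _ ≤ s * (1 - s) + α * (s * (1 - s)) := by gcongr
      _ ≤ 2 * (1 + α) * (s * (1 - s)) := by nlinarith [mul_nonneg hs0 (sub_nonneg.2 hs1)]

lemma piece₄_mem_Icc (hα : 0 ≤ α) (ht0 : 0 ≤ t) (hts : t ≤ s) (hs1 : s ≤ 1) :
    t ^ 2 * (1 - s) ∈ Icc 0 (2 * (1 + α) * (s * (1 - s))) := by
  have hs1' : 0 ≤ 1 - s := sub_nonneg.2 hs1
  refine ⟨by positivity, ?_⟩
  calc t ^ 2 * (1 - s) ≤ s * (1 - s) :=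
        mul_le_mul_of_nonneg_right (sq_le_of_le_of_le_one ht0 hts hs1) hs1'
    _ ≤ 2 * (1 + α) * (s * (1 - s)) := by nlinarith [mul_nonneg (ht0.trans hts) hs1']

end Pieces

lemma greenNumerator_mem_Icc {η α t s : ℝ} (hα : 1 ≤ α) (hη : 0 ≤ η) (hαη : α * η ≤ 1)
    (ht : t ∈ Icc (0 : ℝ) 1) (hs : s ∈ Icc (0 : ℝ) 1) :
    greenNumerator η α t s ∈ Icc 0 (2 * (1 + α) * (s * (1 - s))) := by
  obtain ⟨ht0, ht1⟩ := ht
  obtain ⟨hs0, hs1⟩ := hs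
  unfold greenNumerator
  split_ifs with h₁ h₂ h₃
  · exact piece₁_mem_Icc hα hαη hs0 (le_min_iff.1 h₁).1 (le_min_iff.1 h₁).2 ht1
  · exact piece₂_mem_Icc hα hαη ht0 h₂.1 h₂.2 hs1
  · exact piece₃_mem_Icc (by linarith) hη h₃.1 h₃.2 ht1
  · have hts : t ≤ s := by
      by_contra! hst
      rcases le_total s η with hsη | hηs
      · exact h₁ (le_min hsη hst.le)
      · exact h₃ ⟨hηs, hst.le⟩
    exact piece₄_mem_Icc (by linarith) ht0 hts hs1

theorem stmt0_general (η α : ℝ) (hη0 : 0 < η) (hα1 : 1 < α) (hα2 : α < 1 / η) :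
    ∀ t ∈ Icc (0:ℝ) 1, ∀ s ∈ Icc (0:ℝ) 1,
      0 ≤ greenG η α t s ∧ greenG η α t s ≤ g0 η α s := by
  intro t ht s hs
  have hαη : α * η < 1 := (lt_div_iff₀ hη0).1 hα2
  have hscale : 0 ≤ 1 / (2 * (1 - α * η)) := by
    have : 0 < 1 - α * η := by linarith
    positivity
  obtain ⟨hN0, hN1⟩ := greenNumerator_mem_Icc hα1.le hη0.le hαη.le ht hs
  rw [greenG_eq_mul_greenNumerator, g0_eq_mul]
  exact ⟨mul_nonneg hscale hN0, mul_le_mul_of_nonneg_left hN1 hscale⟩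

theorem stmt0 (η α : ℝ) (hη0 : 0 < η) (hη1 : η < 1) (hα1 : 1 < α) (hα2 : α < 1 / η) :
    ∀ t ∈ Icc (0:ℝ) 1, ∀ s ∈ Icc (0:ℝ) 1,
      0 ≤ greenG η α t s ∧ greenG η α t s ≤ g0 η α s :=
  stmt0_general η α hη0 hα1 hα2
end

section
/- For all 0 < η < 1, 1 < α < 1/η, (t,s) ∈ [η/α, η]×[0,1], the Green's function satisfies G(t,s) ≥ k₀ g₀(s), where k₀ = η²/(2α²(1+α)) · min{α-1, 1} and g₀(s) = (1+α)/(1-αη) · s(1-s). Moreover 0 < k₀ < 1. -/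
open Set

noncomputable def k0 (η α : ℝ) : ℝ := η ^ 2 / (2 * α ^ 2 * (1 + α)) * min (α - 1) 1

/-- For `t ≤ η` the third branch of `greenG` is never taken, and each remaining branch
dominates `c t² s (1 - s)` through a single term: `t² s (α - 1)` in the first two,
`t² (1 - s)` in the last. -/
theorem mul_sq_mul_le_greenG {η α t s c : ℝ} (hαη : α * η ≤ 1) (htη : t ≤ η)
    (hs0 : 0 ≤ s) (hs1 : s ≤ 1) (hc0 : 0 ≤ c) (hcα : c ≤ α - 1) (hc1 : c ≤ 1) :
    c * t ^ 2 * (s * (1 - s)) / (2 * (1 - α * η)) ≤ greenG η α t s := by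
  have hD : 0 ≤ 1 - α * η := by linarith
  have hcs : c * t ^ 2 * (s * (1 - s)) ≤ t ^ 2 * s * (α - 1) := by
    nlinarith [mul_nonneg (mul_nonneg hc0 (sq_nonneg t)) (mul_nonneg hs0 hs0),
      mul_nonneg (mul_nonneg hs0 (sq_nonneg t)) (sub_nonneg.2 hcα)]
  rw [greenG, div_eq_inv_mul, ← one_div]
  refine mul_le_mul_of_nonneg_left ?_ (by positivity)
  split_ifs with h₁ h₂ h₃
  · have hst : s ≤ t := h₁.trans (min_le_right _ _)
    nlinarith [mul_nonneg (mul_nonneg hs0 (by linarith : 0 ≤ 2 * t - s)) hD]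
  · nlinarith [mul_nonneg (sq_nonneg t) hD]
  · exact absurd (le_min (h₃.2.trans htη) h₃.2) h₁
  · nlinarith [mul_nonneg (mul_nonneg (sq_nonneg t) (sub_nonneg.2 hs1))
      (by nlinarith : 0 ≤ 1 - c * s)]

theorem k0_mul_g0 {η α : ℝ} (hα : 0 < α) (s : ℝ) :
    k0 η α * g0 η α s = min (α - 1) 1 * (η / α) ^ 2 * (s * (1 - s)) / (2 * (1 - α * η)) := by
  have hα1 : 1 + α ≠ 0 := by positivity
  unfold k0 g0
  field_simp

theorem k0_pos {η α : ℝ} (hη : 0 < η) (hα : 1 < α) : 0 < k0 η α := by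
  have : 0 < min (α - 1) 1 := lt_min (by linarith) one_pos
  unfold k0
  positivity

theorem k0_lt_one {η α : ℝ} (hη0 : 0 < η) (hη1 : η < 1) (hα : 1 < α) : k0 η α < 1 := by
  have hm : min (α - 1) 1 ≤ 1 := min_le_right _ _
  unfold k0
  calc η ^ 2 / (2 * α ^ 2 * (1 + α)) * min (α - 1) 1
      ≤ η ^ 2 / (2 * α ^ 2 * (1 + α)) := mul_le_of_le_one_right (by positivity) hm
    _ < 1 := by rw [div_lt_one (by positivity)]; nlinarith

theorem stmt1 (η α : ℝ) (hη0 : 0 < η) (hη1 : η < 1) (hα1 : 1 < α) (hα2 : α < 1 / η) :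
    (∀ t ∈ Icc (η / α) η, ∀ s ∈ Icc (0:ℝ) 1,
      k0 η α * g0 η α s ≤ greenG η α t s) ∧ 0 < k0 η α ∧ k0 η α < 1 := by
  have hα0 : 0 < α := by linarith
  have hαη : α * η < 1 := (lt_div_iff₀ hη0).mp hα2
  refine ⟨fun t ⟨htl, htη⟩ s ⟨hs0, hs1⟩ => ?_, k0_pos hη0 hα1, k0_lt_one hη0 hη1 hα1⟩
  have hm0 : 0 ≤ min (α - 1) 1 := le_min (by linarith) zero_le_one
  have hts : (η / α) ^ 2 ≤ t ^ 2 := pow_le_pow_left₀ (by positivity) htl 2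
  calc k0 η α * g0 η α s
      = min (α - 1) 1 * (η / α) ^ 2 * (s * (1 - s)) / (2 * (1 - α * η)) := k0_mul_g0 hα0 s
    _ ≤ min (α - 1) 1 * t ^ 2 * (s * (1 - s)) / (2 * (1 - α * η)) := by
        gcongr
    _ ≤ greenG η α t s :=
        mul_sq_mul_le_greenG hαη.le htη hs0 hs1 hm0 (min_le_left _ _) (min_le_right _ _)
end

section
/- For all 0 < η < 1, 1 < α < 1/η, and (t,s) ∈ [0,1]×[0,1], the partial derivative ∂G/∂t(t,s) satisfies 0 ≤ ∂G/∂t(t,s) ≤ g₁(s) where g₁(s) = (1-s)/(1-αη). -/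
/-! In every branch the bracket in `greenGt` lies in `[0, 1 - s]`, and dividing by `1 - αη > 0`
gives the claim. Only the two middle branches need work: the second one is increasing in `t`, so it
is dominated by the first branch at `t = s`; the third one is affine in `t` with values `s (1 - s)`
at `t = s` and `αη (1 - s)` at `t = 1`. -/

open Set

noncomputable def greenGt (η α t s : ℝ) : ℝ :=
  (1 / (1 - α * η)) *
    (if s ≤ min η t then s * (1 - α * η) + t * s * (α - 1)
     else if t ≤ s ∧ s ≤ η then t * (1 - α * η) + t * s * (α - 1)
     else if η ≤ s ∧ s ≤ t then s * (1 - α * η) + t * (α * η - s)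
     else t * (1 - s))

noncomputable def g1 (η α s : ℝ) : ℝ := (1 - s) / (1 - α * η)

section Branches

variable {η α t s : ℝ}

lemma first_branch_mem_Icc (hη : η ≤ 1) (hα : 1 ≤ α) (hαη : α * η ≤ 1)
    (hs0 : 0 ≤ s) (hsη : s ≤ η) (ht0 : 0 ≤ t) (ht1 : t ≤ 1) :
    s * (1 - α * η) + t * s * (α - 1) ∈ Icc 0 (1 - s) := by
  have hα1 : 0 ≤ α - 1 := by linarith
  constructor
  · have : 0 ≤ 1 - α * η := by linarith
    positivity
  · have h_at_one : s * (1 - α * η) + t * s * (α - 1) ≤ s * α * (1 - η) := by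
      nlinarith [mul_nonneg (mul_nonneg (sub_nonneg.mpr ht1) hs0) hα1]
    -- at `s = η` the bound `s (1 + α (1 - η)) ≤ 1` is `(1 - η) (1 - αη) ≥ 0`
    have h_at_eta : s * (1 + α * (1 - η)) ≤ 1 := by
      nlinarith [mul_nonneg (sub_nonneg.mpr hsη) (by nlinarith : (0:ℝ) ≤ 1 + α * (1 - η)),
        mul_nonneg (sub_nonneg.mpr hη) (sub_nonneg.mpr hαη)]
    linarith

lemma second_branch_mem_Icc (hη : η ≤ 1) (hα : 1 ≤ α) (hαη : α * η ≤ 1)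
    (ht0 : 0 ≤ t) (hts : t ≤ s) (hsη : s ≤ η) :
    t * (1 - α * η) + t * s * (α - 1) ∈ Icc 0 (1 - s) := by
  have hs0 : 0 ≤ s := ht0.trans hts
  have hfactor : 0 ≤ 1 - α * η + s * (α - 1) := by nlinarith
  have hfirst := first_branch_mem_Icc hη hα hαη hs0 hsη hs0 (hsη.trans hη)
  refine ⟨by nlinarith, le_trans ?_ hfirst.2⟩
  nlinarith [mul_le_mul_of_nonneg_right hts hfactor]

lemma third_branch_mem_Icc {c : ℝ} (hc0 : 0 ≤ c) (hc1 : c ≤ 1)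
    (hs0 : 0 ≤ s) (hst : s ≤ t) (ht1 : t ≤ 1) :
    s * (1 - c) + t * (c - s) ∈ Icc 0 (1 - s) := by
  have hs1 : s ≤ 1 := hst.trans ht1
  have h_from_s : s * (1 - c) + t * (c - s) = s * (1 - s) + (t - s) * (c - s) := by ring
  have h_from_one : s * (1 - c) + t * (c - s) = c * (1 - s) + (1 - t) * (s - c) := by ring
  rcases le_total s c with hsc | hcs
  · constructor
    · rw [h_from_s]
      nlinarith [mul_nonneg (sub_nonneg.mpr hst) (sub_nonneg.mpr hsc)]
    · rw [h_from_one]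
      nlinarith [mul_nonneg (sub_nonneg.mpr ht1) (sub_nonneg.mpr hsc)]
  · constructor
    · rw [h_from_one]
      nlinarith [mul_nonneg (sub_nonneg.mpr ht1) (sub_nonneg.mpr hcs)]
    · rw [h_from_s]
      nlinarith [mul_nonneg (sub_nonneg.mpr hst) (sub_nonneg.mpr hcs)]

lemma fourth_branch_mem_Icc (ht0 : 0 ≤ t) (ht1 : t ≤ 1) (hs1 : s ≤ 1) :
    t * (1 - s) ∈ Icc 0 (1 - s) :=
  ⟨mul_nonneg ht0 (sub_nonneg.mpr hs1), mul_le_of_le_one_left (sub_nonneg.mpr hs1) ht1⟩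

end Branches

lemma scaled_bounds_of_mem_Icc {η α s X : ℝ} (hd : 0 < 1 - α * η) (hX : X ∈ Icc 0 (1 - s)) :
    0 ≤ (1 / (1 - α * η)) * X ∧ (1 / (1 - α * η)) * X ≤ g1 η α s := by
  rw [g1, one_div_mul_eq_div]
  exact ⟨div_nonneg hX.1 hd.le, div_le_div_of_nonneg_right hX.2 hd.le⟩

theorem stmt2 (η α : ℝ) (hη0 : 0 < η) (hη1 : η < 1) (hα1 : 1 < α) (hα2 : α < 1 / η) :
    ∀ t ∈ Icc (0:ℝ) 1, ∀ s ∈ Icc (0:ℝ) 1,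
      0 ≤ greenGt η α t s ∧ greenGt η α t s ≤ g1 η α s := by
  rintro t ⟨ht0, ht1⟩ s ⟨hs0, hs1⟩
  have hαη : α * η < 1 := (lt_div_iff₀ hη0).mp hα2
  apply scaled_bounds_of_mem_Icc (by linarith)
  split_ifs with h₁ h₂ h₃
  · exact first_branch_mem_Icc hη1.le hα1.le hαη.le hs0 (h₁.trans (min_le_left _ _)) ht0 ht1
  · exact second_branch_mem_Icc hη1.le hα1.le hαη.le ht0 h₂.1 h₂.2
  · exact third_branch_mem_Icc (by positivity) hαη.le hs0 h₃.2 ht1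
  · exact fourth_branch_mem_Icc ht0 ht1 hs1
end
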